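/- For every K_n, every spline degree p, and every index set α ⊆ {1,…,K_n+p−2}, the matrix F_αF_αᵀ ∈ ℝ^{ℓ×ℓ} is tridiagonal, has nonnegative entries, and is strictly diagonally dominant (each diagonal entry strictly exceeds the sum of the absolute values of the off-diagonal entries in its row). -/

import Mathlib

/-!
The rows of `F_α` are hat functions on the grid of free coordinates `a₀ < a₁ < ⋯`, so row `j`
is supported on `(a_{j-1}, a_{j+1})` and `F_α F_αᵀ` is tridiagonal with nonnegative entries.
The hats form a partition of unity, hence the off-diagonal part of row `j` of `F_α F_αᵀ` sums to
`∑ₜ F_{jt} - ∑ₜ F_{jt}²`, and strict dominance amounts to `∑ₜ (2F_{jt}² - F_{jt}) > 0`. The peak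
`t = a_j` contributes `1`, and on each flank the mirror image `t' = a + b - t` of `t` carries the
complementary value `1 - F_{jt}`, so each pair contributes `(2F_{jt} - 1)² ≥ 0`.
-/

open Matrix

noncomputable section

/-- The free (breakpoint) coordinates determined by the active set `α`: coordinate `t` is free
iff it is not the middle coordinate of an active second-difference constraint. -/
def freeSet (m : ℕ) (α : Finset (Fin (m - 2))) : Finset (Fin m) :=
  Finset.univ.filter fun t => ∀ i ∈ α, t.val ≠ i.val + 1

/-- The `j`-th free coordinate, in increasing order (`= m` out of range). -/
def freeIdx (m : ℕ) (α : Finset (Fin (m - 2))) (j : ℕ) : ℕ :=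
  if h : j < (freeSet m α).card then (((freeSet m α).orderIsoOfFin rfl) ⟨j, h⟩).1.1 else m

/-- The interpolation matrix `F_α ∈ ℝ^{ℓ×m}`, `ℓ = m - |α|`: its `j`-th row is the
piecewise-linear hat function on the grid of free coordinates which equals `1` at the `j`-th
free coordinate and `0` at all other free coordinates, so that `b = F_αᵀ b̃` recovers a vector
satisfying the active constraints from its free values `b̃`. -/
def Fmat (m : ℕ) (α : Finset (Fin (m - 2))) : Matrix (Fin (freeSet m α).card) (Fin m) ℝ :=
  fun j t =>
    if t.val = freeIdx m α j.val then 1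
    else if freeIdx m α j.val < t.val ∧ t.val < freeIdx m α (j.val + 1) then
      ((freeIdx m α (j.val + 1) : ℝ) - (t.val : ℝ)) /
        ((freeIdx m α (j.val + 1) : ℝ) - (freeIdx m α j.val : ℝ))
    else if 0 < j.val ∧ freeIdx m α (j.val - 1) < t.val ∧ t.val < freeIdx m α j.val then
      ((t.val : ℝ) - (freeIdx m α (j.val - 1) : ℝ)) /
        ((freeIdx m α j.val : ℝ) - (freeIdx m α (j.val - 1) : ℝ))
    else 0

theorem Finset.sum_Ioo_two_mul_sq_sub_self_nonneg {a b : ℕ} (f : ℕ → ℝ)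
    (hf : ∀ s ∈ Finset.Ioo a b, f s + f (a + b - s) = 1) :
    0 ≤ ∑ s ∈ Finset.Ioo a b, (2 * f s ^ 2 - f s) := by
  have reflect : ∑ s ∈ Finset.Ioo a b, (2 * f s ^ 2 - f s)
      = ∑ s ∈ Finset.Ioo a b, (2 * f (a + b - s) ^ 2 - f (a + b - s)) := by
    refine Finset.sum_nbij' (fun s => a + b - s) (fun s => a + b - s) ?_ ?_ ?_ ?_ ?_ <;>
      intro s hs <;> simp only [Finset.mem_Ioo] at hs ⊢
    all_goals first | omega | rw [Nat.sub_sub_self (by omega)]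
  have paired : 2 * ∑ s ∈ Finset.Ioo a b, (2 * f s ^ 2 - f s)
      = ∑ s ∈ Finset.Ioo a b, (2 * f s - 1) ^ 2 := by
    rw [two_mul]
    nth_rw 2 [reflect]
    rw [← Finset.sum_add_distrib]
    refine Finset.sum_congr rfl fun s hs => ?_
    rw [eq_sub_of_add_eq' (hf s hs)]
    ring
  linarith [Finset.sum_nonneg fun s (_ : s ∈ Finset.Ioo a b) => sq_nonneg (2 * f s - 1)]

theorem Matrix.mul_transpose_apply_nonneg {ι κ R : Type*} [Fintype κ] [Semiring R]
    [PartialOrder R] [IsOrderedRing R] {F : Matrix ι κ R} (hF : ∀ i t, 0 ≤ F i t) (i j : ι) :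
    0 ≤ (F * Fᵀ) i j :=
  Finset.sum_nonneg fun t _ => mul_nonneg (hF i t) (hF j t)

theorem Matrix.sum_erase_abs_mul_transpose_lt {ι κ : Type*} [Fintype ι] [Fintype κ]
    [DecidableEq ι] {F : Matrix ι κ ℝ} (hF : ∀ i t, 0 ≤ F i t) (hcol : ∀ t, ∑ i, F i t = 1)
    {j : ι} (hrow : ∑ t, F j t < 2 * ∑ t, F j t ^ 2) :
    ∑ k ∈ Finset.univ.erase j, |(F * Fᵀ) j k| < (F * Fᵀ) j j := by
  have row_sum : ∑ k, (F * Fᵀ) j k = ∑ t, F j t := by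
    simp only [mul_apply, transpose_apply]
    rw [Finset.sum_comm]
    simp only [← Finset.mul_sum, hcol, mul_one]
  have diag : (F * Fᵀ) j j = ∑ t, F j t ^ 2 := by
    simp only [mul_apply, transpose_apply, sq]
  rw [Finset.sum_congr rfl fun k _ => abs_of_nonneg (mul_transpose_apply_nonneg hF j k),
    Finset.sum_erase_eq_sub (Finset.mem_univ j), row_sum, diag]
  linarith

section FreeIdx

variable {m : ℕ} {α : Finset (Fin (m - 2))} {j k : ℕ}

theorem freeIdx_lt (hj : j < (freeSet m α).card) : freeIdx m α j < m := by
  rw [freeIdx, dif_pos hj]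
  exact (((freeSet m α).orderIsoOfFin rfl) ⟨j, hj⟩).1.2

theorem freeIdx_of_card_le (hj : (freeSet m α).card ≤ j) : freeIdx m α j = m := by
  rw [freeIdx, dif_neg (not_lt.mpr hj)]

theorem freeIdx_le : freeIdx m α j ≤ m := by
  rcases lt_or_ge j (freeSet m α).card with hj | hj
  · exact (freeIdx_lt hj).le
  · exact (freeIdx_of_card_le hj).le

theorem freeIdx_lt_freeIdx (hj : j < (freeSet m α).card) (hjk : j < k) :
    freeIdx m α j < freeIdx m α k := by
  rcases lt_or_ge k (freeSet m α).card with hk | hk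
  · rw [freeIdx, dif_pos hj, freeIdx, dif_pos hk]
    exact ((freeSet m α).orderIsoOfFin rfl).strictMono (show (⟨j, hj⟩ : Fin _) < ⟨k, hk⟩ from hjk)
  · rw [freeIdx_of_card_le hk]
    exact freeIdx_lt hj

theorem freeIdx_mono : Monotone (freeIdx m α) := by
  intro j k hjk
  rcases hjk.eq_or_lt with rfl | hjk
  · rfl
  rcases lt_or_ge j (freeSet m α).card with hj | hj
  · exact (freeIdx_lt_freeIdx hj hjk).le
  · rw [freeIdx_of_card_le hj, freeIdx_of_card_le (hj.trans hjk.le)]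

theorem exists_freeIdx_eq {t : Fin m} (ht : t ∈ freeSet m α) :
    ∃ j < (freeSet m α).card, freeIdx m α j = t := by
  set e := (freeSet m α).orderIsoOfFin rfl
  refine ⟨e.symm ⟨t, ht⟩, (e.symm ⟨t, ht⟩).isLt, ?_⟩
  rw [freeIdx, dif_pos (e.symm ⟨t, ht⟩).isLt, Fin.eta, e.apply_symm_apply]

theorem freeIdx_zero (hm : 0 < m) : freeIdx m α 0 = 0 := by
  obtain ⟨j, -, hj⟩ := exists_freeIdx_eq (α := α) (t := ⟨0, hm⟩)
    (by simp [freeSet])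
  have := freeIdx_mono (α := α) (Nat.zero_le j)
  simp only at hj
  omega

theorem freeIdx_card_sub_one (hm : 0 < m) :
    freeIdx m α ((freeSet m α).card - 1) = m - 1 := by
  obtain ⟨j, hj, hjt⟩ := exists_freeIdx_eq (α := α) (t := ⟨m - 1, by omega⟩)
    (by simp only [freeSet, Finset.mem_filter]; exact ⟨Finset.mem_univ _, fun i _ => by omega⟩)
  have := freeIdx_mono (α := α) (show j ≤ (freeSet m α).card - 1 by omega)
  have := freeIdx_lt (α := α) (show (freeSet m α).card - 1 < (freeSet m α).card by omega)
  simp only at hjt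
  omega

-- uses the junk value `freeIdx m α (freeSet m α).card = m`, which exceeds every coordinate
theorem exists_freeIdx_le_lt {s : ℕ} (hs : s < m) :
    ∃ j < (freeSet m α).card, freeIdx m α j ≤ s ∧ s < freeIdx m α (j + 1) := by
  have hlast : s < freeIdx m α (freeSet m α).card := by rwa [freeIdx_of_card_le le_rfl]
  have hex : ∃ k, s < freeIdx m α k := ⟨_, hlast⟩
  have hpos : Nat.find hex ≠ 0 := by
    intro h
    have := Nat.find_spec hex
    rw [h, freeIdx_zero (by omega)] at this
    omega
  have hle : Nat.find hex ≤ (freeSet m α).card := Nat.find_min' hex hlast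
  refine ⟨Nat.find hex - 1, by omega, not_lt.mp (Nat.find_min hex (by omega)), ?_⟩
  rw [Nat.sub_add_cancel (Nat.pos_of_ne_zero hpos)]
  exact Nat.find_spec hex

end FreeIdx

-- rows of `Fmat` extended to all of `ℕ`, so that row sums split into integer intervals
def hatFun (m : ℕ) (α : Finset (Fin (m - 2))) (j s : ℕ) : ℝ :=
  if s = freeIdx m α j then 1
  else if freeIdx m α j < s ∧ s < freeIdx m α (j + 1) then
    ((freeIdx m α (j + 1) : ℝ) - s) / ((freeIdx m α (j + 1) : ℝ) - freeIdx m α j)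
  else if 0 < j ∧ freeIdx m α (j - 1) < s ∧ s < freeIdx m α j then
    ((s : ℝ) - freeIdx m α (j - 1)) / ((freeIdx m α j : ℝ) - freeIdx m α (j - 1))
  else 0

section HatFun

variable {m : ℕ} {α : Finset (Fin (m - 2))} {j k s : ℕ}

theorem Fmat_apply (j : Fin (freeSet m α).card) (t : Fin m) :
    Fmat m α j t = hatFun m α j t :=
  rfl

theorem hatFun_nonneg : 0 ≤ hatFun m α j s := by
  unfold hatFun
  split_ifs with _ h₂ h₃
  · exact zero_le_one
  · have h₂ : (freeIdx m α j : ℝ) < s ∧ (s : ℝ) < freeIdx m α (j + 1) := by exact_mod_cast h₂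
    exact div_nonneg (by linarith) (by linarith)
  · have h₃ : (freeIdx m α (j - 1) : ℝ) < s ∧ (s : ℝ) < freeIdx m α j := by exact_mod_cast h₃.2
    exact div_nonneg (by linarith) (by linarith)
  · exact le_rfl

theorem hatFun_freeIdx : hatFun m α j (freeIdx m α j) = 1 :=
  if_pos rfl

theorem hatFun_of_lt_of_lt (h₁ : freeIdx m α j < s) (h₂ : s < freeIdx m α (j + 1)) :
    hatFun m α j s =
      ((freeIdx m α (j + 1) : ℝ) - s) / ((freeIdx m α (j + 1) : ℝ) - freeIdx m α j) := by
  rw [hatFun, if_neg h₁.ne', if_pos ⟨h₁, h₂⟩]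

theorem hatFun_of_lt_of_lt_pred (hj : 0 < j) (h₁ : freeIdx m α (j - 1) < s)
    (h₂ : s < freeIdx m α j) :
    hatFun m α j s =
      ((s : ℝ) - freeIdx m α (j - 1)) / ((freeIdx m α j : ℝ) - freeIdx m α (j - 1)) := by
  rw [hatFun, if_neg h₂.ne, if_neg fun h => h.1.not_gt h₂, if_pos ⟨hj, h₁, h₂⟩]

theorem hatFun_add_hatFun_reflect_of_lt_of_lt (h₁ : freeIdx m α j < s)
    (h₂ : s < freeIdx m α (j + 1)) :
    hatFun m α j s + hatFun m α j (freeIdx m α j + freeIdx m α (j + 1) - s) = 1 := by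
  have hgap : (freeIdx m α j : ℝ) < freeIdx m α (j + 1) := by exact_mod_cast h₁.trans h₂
  rw [hatFun_of_lt_of_lt h₁ h₂, hatFun_of_lt_of_lt (by omega) (by omega),
    Nat.cast_sub (by omega), ← add_div, div_eq_one_iff_eq (by linarith)]
  push_cast
  ring

theorem hatFun_add_hatFun_reflect_of_lt_of_lt_pred (hj : 0 < j) (h₁ : freeIdx m α (j - 1) < s)
    (h₂ : s < freeIdx m α j) :
    hatFun m α j s + hatFun m α j (freeIdx m α (j - 1) + freeIdx m α j - s) = 1 := by
  have hgap : (freeIdx m α (j - 1) : ℝ) < freeIdx m α j := by exact_mod_cast h₁.trans h₂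
  rw [hatFun_of_lt_of_lt_pred hj h₁ h₂, hatFun_of_lt_of_lt_pred hj (by omega) (by omega),
    Nat.cast_sub (by omega), ← add_div, div_eq_one_iff_eq (by linarith)]
  push_cast
  ring

theorem hatFun_succ_freeIdx (hj : j < (freeSet m α).card) :
    hatFun m α (j + 1) (freeIdx m α j) = 0 := by
  have := freeIdx_lt_freeIdx hj (Nat.lt_add_one j)
  rw [hatFun, if_neg this.ne, if_neg fun h => h.1.not_gt this,
    if_neg fun h => (Nat.add_sub_cancel j 1 ▸ h.2.1).false]

theorem eq_or_lt_and_lt_of_hatFun_ne_zero (hj : j < (freeSet m α).card)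
    (h : hatFun m α j s ≠ 0) :
    s = freeIdx m α j ∨ freeIdx m α (j - 1) < s ∧ s < freeIdx m α (j + 1) := by
  have hmono := freeIdx_mono (α := α) (Nat.sub_le j 1)
  have hstrict := freeIdx_lt_freeIdx hj (Nat.lt_add_one j)
  unfold hatFun at h
  split_ifs at h with h₁ h₂ h₃
  · exact Or.inl h₁
  · exact Or.inr ⟨hmono.trans_lt h₂.1, h₂.2⟩
  · exact Or.inr ⟨h₃.2.1, h₃.2.2.trans hstrict⟩
  · exact absurd rfl h

theorem hatFun_mul_hatFun_eq_zero (hk : k < (freeSet m α).card) (hjk : j + 2 ≤ k) :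
    hatFun m α j s * hatFun m α k s = 0 := by
  by_contra h
  obtain ⟨hj0, hk0⟩ := mul_ne_zero_iff.mp h
  have := eq_or_lt_and_lt_of_hatFun_ne_zero (by omega) hj0
  have := eq_or_lt_and_lt_of_hatFun_ne_zero hk hk0
  have := freeIdx_lt_freeIdx (α := α) (j := j) (by omega) (Nat.lt_add_one j)
  have := freeIdx_lt_freeIdx (α := α) (j := k - 1) (by omega) (show k - 1 < k by omega)
  have := freeIdx_mono (α := α) (show j + 1 ≤ k - 1 by omega)
  omega

theorem hatFun_eq_zero_of_lt_or_gt (hk : k < (freeSet m α).card)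
    (h₁ : freeIdx m α j ≤ s) (h₂ : s < freeIdx m α (j + 1)) (hkj : k < j ∨ j + 1 < k) :
    hatFun m α k s = 0 := by
  by_contra h
  have := eq_or_lt_and_lt_of_hatFun_ne_zero hk h
  rcases hkj with hkj | hkj
  · have := freeIdx_lt_freeIdx hk (Nat.lt_add_one k)
    have := freeIdx_mono (α := α) (show k + 1 ≤ j by omega)
    omega
  · have := freeIdx_lt_freeIdx (α := α) (j := k - 1) (by omega) (show k - 1 < k by omega)
    have := freeIdx_mono (α := α) (show j + 1 ≤ k - 1 by omega)
    omega

end HatFun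

section Sums

variable {m : ℕ} {α : Finset (Fin (m - 2))}

theorem sum_hatFun_eq_one {s : ℕ} (hs : s < m) :
    ∑ k : Fin (freeSet m α).card, hatFun m α k s = 1 := by
  obtain ⟨j, hj, h₁, h₂⟩ := exists_freeIdx_le_lt (α := α) hs
  rcases h₁.eq_or_lt with rfl | hlt
  · rw [Finset.sum_eq_single ⟨j, hj⟩ (fun k _ hk => ?_) (by simp), hatFun_freeIdx]
    rcases lt_trichotomy k.val (j + 1) with hkj | hkj | hkj
    · exact hatFun_eq_zero_of_lt_or_gt k.isLt le_rfl h₂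
        (Or.inl (lt_of_le_of_ne (by omega) fun h => hk (Fin.ext h)))
    · rw [hkj]
      exact hatFun_succ_freeIdx hj
    · exact hatFun_eq_zero_of_lt_or_gt k.isLt le_rfl h₂ (Or.inr hkj)
  · have hj₁ : j + 1 < (freeSet m α).card := by
      by_contra! hc
      have hlast := freeIdx_card_sub_one (α := α) (show 0 < m by omega)
      rw [show (freeSet m α).card - 1 = j by omega] at hlast
      rw [freeIdx_of_card_le hc] at h₂
      omega
    have hne : (⟨j, hj⟩ : Fin _) ≠ ⟨j + 1, hj₁⟩ := by simp
    rw [← Finset.sum_subset (Finset.subset_univ {⟨j, hj⟩, ⟨j + 1, hj₁⟩}) fun k _ hk => ?_,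
      Finset.sum_pair hne]
    · have hgap : (freeIdx m α j : ℝ) < freeIdx m α (j + 1) := by exact_mod_cast hlt.trans h₂
      simp only
      rw [hatFun_of_lt_of_lt hlt h₂,
        hatFun_of_lt_of_lt_pred (j := j + 1) j.succ_pos (by simpa using hlt) (by simpa using h₂),
        Nat.add_sub_cancel, ← add_div, div_eq_one_iff_eq (by linarith)]
      ring
    · simp only [Finset.mem_insert, Finset.mem_singleton, Fin.ext_iff] at hk
      exact hatFun_eq_zero_of_lt_or_gt k.isLt h₁ h₂ (by omega)

theorem sum_range_two_mul_hatFun_sq_sub_pos {j : ℕ} (hj : j < (freeSet m α).card) :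
    0 < ∑ s ∈ Finset.range m, (2 * hatFun m α j s ^ 2 - hatFun m α j s) := by
  set a₀ := freeIdx m α (j - 1)
  set a := freeIdx m α j
  set b := freeIdx m α (j + 1)
  have hab : a < b := freeIdx_lt_freeIdx hj (Nat.lt_add_one j)
  have hleft : 0 ≤ ∑ s ∈ Finset.Ioo a₀ a, (2 * hatFun m α j s ^ 2 - hatFun m α j s) := by
    refine Finset.sum_Ioo_two_mul_sq_sub_self_nonneg _ fun s hs => ?_
    rw [Finset.mem_Ioo] at hs
    have hj₀ : 0 < j := by
      by_contra! h
      have : a₀ = a := congrArg (freeIdx m α) (by omega)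
      omega
    exact hatFun_add_hatFun_reflect_of_lt_of_lt_pred hj₀ hs.1 hs.2
  have hright : 0 ≤ ∑ s ∈ Finset.Ioo a b, (2 * hatFun m α j s ^ 2 - hatFun m α j s) :=
    Finset.sum_Ioo_two_mul_sq_sub_self_nonneg _ fun s hs =>
      hatFun_add_hatFun_reflect_of_lt_of_lt (Finset.mem_Ioo.mp hs).1 (Finset.mem_Ioo.mp hs).2
  have hsupp : ∀ s ∉ Finset.Ioo a₀ a ∪ Finset.Ico a b, hatFun m α j s = 0 := by
    intro s hs
    by_contra h
    have := eq_or_lt_and_lt_of_hatFun_ne_zero hj h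
    simp only [Finset.mem_union, Finset.mem_Ioo, Finset.mem_Ico] at hs
    omega
  have hsub : Finset.Ioo a₀ a ∪ Finset.Ico a b ⊆ Finset.range m := by
    intro s hs
    simp only [Finset.mem_union, Finset.mem_Ioo, Finset.mem_Ico, Finset.mem_range] at hs ⊢
    have : b ≤ m := freeIdx_le
    omega
  have hdisj : Disjoint (Finset.Ioo a₀ a) (Finset.Ico a b) := by
    rw [Finset.disjoint_left]
    simp only [Finset.mem_Ioo, Finset.mem_Ico]
    omega
  rw [← Finset.sum_subset hsub fun s _ hs => by rw [hsupp s hs]; ring, Finset.sum_union hdisj,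
    Finset.sum_eq_sum_Ico_succ_bot hab, Finset.Ico_add_one_left_eq_Ioo, hatFun_freeIdx]
  linarith

theorem sum_Fmat_lt_two_mul_sum_sq (j : Fin (freeSet m α).card) :
    ∑ t, Fmat m α j t < 2 * ∑ t, Fmat m α j t ^ 2 := by
  have := sum_range_two_mul_hatFun_sq_sub_pos j.isLt
  rw [Finset.sum_sub_distrib, ← Finset.mul_sum, Finset.sum_range, Finset.sum_range] at this
  simp only [Fmat_apply]
  linarith

end Sums

/-- Lemma 6.1.  For every `K_n`, spline degree `p` and index set
`α ⊆ {1,…,K_n+p-2}`, the matrix `F_α F_αᵀ` is tridiagonal, nonnegative, and strictly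
diagonally dominant. -/
theorem stmt2 (K p : ℕ) (α : Finset (Fin (K + p - 2))) :
    (∀ j k : Fin (freeSet (K + p) α).card,
        (j.val + 2 ≤ k.val ∨ k.val + 2 ≤ j.val) →
        (Fmat (K + p) α * (Fmat (K + p) α)ᵀ) j k = 0) ∧
    (∀ j k : Fin (freeSet (K + p) α).card,
        0 ≤ (Fmat (K + p) α * (Fmat (K + p) α)ᵀ) j k) ∧
    (∀ j : Fin (freeSet (K + p) α).card,
        ∑ k ∈ Finset.univ.erase j, |(Fmat (K + p) α * (Fmat (K + p) α)ᵀ) j k| <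
          (Fmat (K + p) α * (Fmat (K + p) α)ᵀ) j j) := by
  have nonneg : ∀ j t, 0 ≤ Fmat (K + p) α j t := fun _ _ => hatFun_nonneg
  refine ⟨fun j k hjk => ?_, mul_transpose_apply_nonneg nonneg,
    fun j => sum_erase_abs_mul_transpose_lt nonneg (fun t => sum_hatFun_eq_one t.isLt)
      (sum_Fmat_lt_two_mul_sum_sq j)⟩
  rw [mul_apply]
  refine Finset.sum_eq_zero fun t _ => ?_
  rw [transpose_apply, Fmat_apply, Fmat_apply]
  rcases hjk with h | h
  · exact hatFun_mul_hatFun_eq_zero k.isLt h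
  · exact mul_comm (hatFun _ _ j t) _ ▸ hatFun_mul_hatFun_eq_zero j.isLt h

end
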